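/- For every integer t ≥ 1, no one-way deterministic one-counter automaton (1D1CA) over the alphabet {a,b,c,d} solves the promise problem ONE-NONE(t), i.e., for every 1D1CA M it is not the case that M accepts every string in (ONE·NONE)^t and rejects every string in (NONE·ONE)^t. -/

import Mathlib

/-!
From every configuration some word of `ONE` and some word of `NONE` drive the automaton to the
same configuration; chaining such pairs, with the roles swapped at each stage, yields a word of
`(ONE·NONE)^t` and a word of `(NONE·ONE)^t` that end in the same state.

To find the pair, read `aᵏ`. If this orbit revisits a configuration, `a^{k₁} b^{k₁} c^r` and
`a^{k₂} b^{k₁} c^r` do the job. Otherwise the counter is zero only finitely often, after which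
the machine runs without zero tests: the states become periodic and each period of `a`s adds a
fixed nonzero drift `Da` to the counter. Once the counter is large, blocks `b^{B+jP}` and
`c^{B+kP}` are read without zero tests as well and add `j·Db + k·Dc` up to a constant. Trading
`Db` periods of `a` against `Da` periods of `b` keeps the final configuration while turning a word
with `#b = #c` into one whose three counts are distinct.
-/

/-- Input symbols extended with the left (`cent`) and right (`dollar`) end-markers. -/
inductive TSym (α : Type) : Type
  | cent : TSym α
  | letter : α → TSym α
  | dollar : TSym α

/-- The tape content `¢ w $` for an input word `w`. -/
def tagged {α : Type} (w : List α) : List (TSym α) :=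
  TSym.cent :: (w.map TSym.letter ++ [TSym.dollar])

/-- A one-way deterministic one-counter automaton. -/
structure OneD1CA (α : Type) where
  Q : Type
  [fintypeQ : Fintype Q]
  [decQ : DecidableEq Q]
  q0 : Q
  acc : Set Q
  m : ℕ
  δ : Q → TSym α → Bool → Q × ℤ
  bound : ∀ q σ z, |(δ q σ z).2| ≤ (m : ℤ)

attribute [instance] OneD1CA.fintypeQ OneD1CA.decQ

namespace OneD1CA

variable {α : Type} (M : OneD1CA α)

/-- One computation step on a configuration (state, counter value). -/
def step (p : M.Q × ℤ) (σ : TSym α) : M.Q × ℤ :=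
  ((M.δ p.1 σ (decide (p.2 = 0))).1, p.2 + (M.δ p.1 σ (decide (p.2 = 0))).2)

/-- Configuration reached from the initial configuration after reading a list of tape symbols. -/
def confAfter (l : List (TSym α)) : M.Q × ℤ :=
  l.foldl M.step (M.q0, 0)

/-- The automaton accepts `w` iff the state after reading `¢ w $` is accepting. -/
def accepts (w : List α) : Prop :=
  (M.confAfter (tagged w)).1 ∈ M.acc

/-- The automaton recognizes the language `L` if it accepts exactly the members of `L`. -/
def recognizes (L : Set (List α)) : Prop :=
  ∀ w : List α, M.accepts w ↔ w ∈ L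

end OneD1CA

/-- The alphabet `{a, b, c, d}`. -/
inductive ΓN : Type
  | a : ΓN
  | b : ΓN
  | c : ΓN
  | d : ΓN
deriving DecidableEq

/-- Exactly one of three propositions holds. -/
def exactlyOne (P Q R : Prop) : Prop :=
  (P ∧ ¬Q ∧ ¬R) ∨ (¬P ∧ Q ∧ ¬R) ∨ (¬P ∧ ¬Q ∧ R)

/-- `#_a(u) = #_b(u)`. -/
def eqAB (u : List ΓN) : Prop := u.count ΓN.a = u.count ΓN.b
/-- `#_b(u) = #_c(u)`. -/
def eqBC (u : List ΓN) : Prop := u.count ΓN.b = u.count ΓN.c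
/-- `#_c(u) = #_a(u)`. -/
def eqCA (u : List ΓN) : Prop := u.count ΓN.c = u.count ΓN.a

/-- The language `ONE`: strings `u ++ y` with `u ∈ {a,b,c}*`, `y ∈ {d}*`,
`|y| ≥ |u|`, and exactly one of the three count equalities holding for `u`. -/
def ONE : Language ΓN :=
  {w | ∃ u y : List ΓN, w = u ++ y ∧ (∀ x ∈ u, x ≠ ΓN.d) ∧ (∀ x ∈ y, x = ΓN.d) ∧
    u.length ≤ y.length ∧ exactlyOne (eqAB u) (eqBC u) (eqCA u)}

/-- The language `NONE`: as `ONE`, but none of the three count equalities holds. -/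
def NONE : Language ΓN :=
  {w | ∃ u y : List ΓN, w = u ++ y ∧ (∀ x ∈ u, x ≠ ΓN.d) ∧ (∀ x ∈ y, x = ΓN.d) ∧
    u.length ≤ y.length ∧ ¬ eqAB u ∧ ¬ eqBC u ∧ ¬ eqCA u}


theorem Function.exists_isPeriodicPt_iterate {X : Type*} [Finite X] (f : X → X) :
    ∃ B P, 0 < P ∧ ∀ x, Function.IsPeriodicPt f P (f^[B] x) := by
  obtain ⟨k₁, k₂, hne, heq⟩ := Finite.exists_ne_map_eq_of_infinite fun k : ℕ => f^[k]
  wlog hlt : k₁ < k₂ generalizing k₁ k₂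
  · exact this k₂ k₁ hne.symm heq.symm (by omega)
  refine ⟨k₁, k₂ - k₁, by omega, fun x => ?_⟩
  rw [Function.IsPeriodicPt, Function.IsFixedPt, ← Function.iterate_add_apply,
    Nat.sub_add_cancel hlt.le, heq]

open List Function

namespace OneD1CA

variable {α : Type} (M : OneD1CA α)

def run (c : M.Q × ℤ) (w : List α) : M.Q × ℤ :=
  w.foldl (fun c a => M.step c (.letter a)) c

/- While the counter is nonzero, reading `a` moves the state by `M.next a` and adds
`M.incr a` to the counter; `M.drift a k q` is the total increment of `k` such steps. -/
def next (a : α) (q : M.Q) : M.Q := (M.δ q (.letter a) false).1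

def incr (a : α) (q : M.Q) : ℤ := (M.δ q (.letter a) false).2

def drift (a : α) (k : ℕ) (q : M.Q) : ℤ :=
  ∑ i ∈ Finset.range k, M.incr a ((M.next a)^[i] q)

variable {M}

@[simp] theorem run_nil (c : M.Q × ℤ) : M.run c [] = c := rfl

theorem run_append (c : M.Q × ℤ) (u v : List α) : M.run c (u ++ v) = M.run (M.run c u) v :=
  foldl_append

theorem run_replicate_succ (c : M.Q × ℤ) (a : α) (k : ℕ) :
    M.run c (replicate (k + 1) a) = M.step (M.run c (replicate k a)) (.letter a) := by
  rw [replicate_succ', run_append]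
  rfl

theorem accepts_iff_run (w : List α) :
    M.accepts w ↔ (M.step (M.run (M.step (M.q0, 0) .cent) w) .dollar).1 ∈ M.acc := by
  rw [accepts, confAfter, tagged, foldl_cons, foldl_append, foldl_map]
  rfl

theorem abs_run_sub_le (c : M.Q × ℤ) (w : List α) :
    |(M.run c w).2 - c.2| ≤ M.m * w.length := by
  induction w generalizing c with
  | nil => simp
  | cons a w ih =>
    have hstep := M.bound c.1 (.letter a) (decide (c.2 = 0))
    have hrest := ih (M.step c (.letter a))
    have hsplit : (M.run c (a :: w)).2 - c.2 =
        ((M.run (M.step c (.letter a)) w).2 - (M.step c (.letter a)).2) +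
          (M.δ c.1 (.letter a) (decide (c.2 = 0))).2 := by
      simp only [run, foldl_cons, step]
      ring
    rw [hsplit, length_cons]
    push_cast
    linarith [abs_add_le ((M.run (M.step c (.letter a)) w).2 - (M.step c (.letter a)).2)
      (M.δ c.1 (.letter a) (decide (c.2 = 0))).2]

theorem step_letter_of_ne_zero {c : M.Q × ℤ} (h : c.2 ≠ 0) (a : α) :
    M.step c (.letter a) = (M.next a c.1, c.2 + M.incr a c.1) := by
  simp [step, next, incr, h]

theorem drift_add (a : α) (k j : ℕ) (q : M.Q) :
    M.drift a (k + j) q = M.drift a k q + M.drift a j ((M.next a)^[k] q) := by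
  rw [drift, drift, drift, Finset.sum_range_add]
  simp only [add_comm k, iterate_add_apply]

theorem drift_mul_of_isPeriodicPt {a : α} {P : ℕ} {q : M.Q} (hq : IsPeriodicPt (M.next a) P q)
    (n : ℕ) : M.drift a (n * P) q = n * M.drift a P q := by
  induction n with
  | zero => simp [drift]
  | succ n ih =>
    rw [add_mul, one_mul, drift_add, (hq.const_mul n).eq, ih]
    push_cast
    ring

theorem run_replicate_of_ne_zero {c : M.Q × ℤ} {a : α} {k : ℕ}
    (h : ∀ i < k, (M.run c (replicate i a)).2 ≠ 0) :
    M.run c (replicate k a) = ((M.next a)^[k] c.1, c.2 + M.drift a k c.1) := by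
  induction k with
  | zero => simp [drift]
  | succ k ih =>
    have ih := ih fun i hi => h i (by omega)
    have hk := h k (by omega)
    rw [ih] at hk
    rw [run_replicate_succ, ih, step_letter_of_ne_zero hk]
    simp [iterate_succ_apply', drift, Finset.sum_range_succ, add_assoc]

theorem run_replicate_add_mul {c : M.Q × ℤ} {a : α} {B P n : ℕ}
    (hper : IsPeriodicPt (M.next a) P ((M.next a)^[B] c.1))
    (h : ∀ i < B + n * P, (M.run c (replicate i a)).2 ≠ 0) :
    M.run c (replicate (B + n * P) a) = ((M.next a)^[B] c.1,
      c.2 + M.drift a B c.1 + n * M.drift a P ((M.next a)^[B] c.1)) := by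
  rw [run_replicate_of_ne_zero h, drift_add, drift_mul_of_isPeriodicPt hper, add_comm B,
    iterate_add_apply, (hper.const_mul n).eq, add_assoc]

theorem run_replicate_add_mul_of_lt_abs {c : M.Q × ℤ} {a : α} {B P n : ℕ}
    (hper : IsPeriodicPt (M.next a) P ((M.next a)^[B] c.1)) (h : M.m * (B + n * P) < |c.2|) :
    M.run c (replicate (B + n * P) a) = ((M.next a)^[B] c.1,
      c.2 + M.drift a B c.1 + n * M.drift a P ((M.next a)^[B] c.1)) := by
  refine run_replicate_add_mul hper fun i hi hzero => ?_
  have hi : (M.m * i : ℤ) ≤ M.m * (B + n * P : ℕ) := by gcongr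
  have := abs_run_sub_le c (replicate i a)
  rw [hzero, length_replicate, zero_sub, abs_neg] at this
  push_cast at h hi
  linarith

theorem exists_run_replicate_add_mul_eq_of_injective {c : M.Q × ℤ} {a : α}
    (hinj : Injective fun k => M.run c (replicate k a)) :
    ∃ (G P : ℕ) (q : M.Q) (v D : ℤ), 0 < P ∧ D ≠ 0 ∧
      ∀ i : ℕ, M.run c (replicate (G + i * P) a) = (q, v + i * D) := by
  have hzeros : {k | (M.run c (replicate k a)).2 = 0}.Finite := by
    refine Set.Finite.of_finite_image (f := fun k => (M.run c (replicate k a)).1)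
      (Set.toFinite _) fun k hk l hl h => hinj (Prod.ext h (hk.trans hl.symm))
  obtain ⟨N, hN⟩ := hzeros.bddAbove
  set c' := M.run c (replicate (N + 1) a)
  have hshift (i : ℕ) : M.run c' (replicate i a) = M.run c (replicate (N + 1 + i) a) := by
    rw [replicate_add, run_append]
  obtain ⟨B, P, hP, hper⟩ := exists_isPeriodicPt_iterate (M.next a)
  have hpump (i : ℕ) : M.run c (replicate (N + 1 + (B + i * P)) a) = ((M.next a)^[B] c'.1,
      c'.2 + M.drift a B c'.1 + i * M.drift a P ((M.next a)^[B] c'.1)) := by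
    rw [← hshift]
    refine run_replicate_add_mul (hper c'.1) fun l _ hl => ?_
    rw [hshift] at hl
    have := hN hl
    omega
  refine ⟨N + 1 + B, P, _, _, _, hP, fun hD => ?_, fun i => by rw [add_assoc, hpump]⟩
  have h : M.run c (replicate (N + 1 + (B + 0 * P)) a) =
      M.run c (replicate (N + 1 + (B + 1 * P)) a) := by
    simp only [hpump, hD, mul_zero]
  have := hinj h
  omega

theorem exists_run_replicate_replicate_eq (b c : α) (q : M.Q) :
    ∃ (B P : ℕ) (q' : M.Q) (S Db Dc : ℤ), 0 < P ∧ ∀ (v : ℤ) (j k : ℕ),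
      M.m * (B + j * P) + M.m * (B + k * P) < |v| →
        M.run (M.run (q, v) (replicate (B + j * P) b)) (replicate (B + k * P) c) =
          (q', v + S + j * Db + k * Dc) := by
  obtain ⟨B, P, hP, hper⟩ := exists_isPeriodicPt_iterate (Prod.map (M.next b) (M.next c))
  have hper' (x : M.Q) := (isPeriodicPt_prodMap _).1 (hper (x, x))
  simp only [Prod.map_iterate, Prod.map_fst, Prod.map_snd] at hper'
  obtain ⟨q₂, hq₂⟩ : ∃ q₂, (M.next b)^[B] q = q₂ := ⟨_, rfl⟩
  refine ⟨B, P, (M.next c)^[B] q₂, M.drift b B q + M.drift c B q₂, M.drift b P q₂,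
    M.drift c P ((M.next c)^[B] q₂), hP, fun v j k hv => ?_⟩
  have hm : (0 : ℤ) ≤ M.m * (B + k * P) := by positivity
  have hb := run_replicate_add_mul_of_lt_abs (n := j) (hper' q).1 (c := (q, v)) (by linarith)
  have hdev := abs_run_sub_le (q, v) (replicate (B + j * P) b)
  simp only [hq₂] at hb
  rw [hb, length_replicate] at hdev
  push_cast at hdev
  rw [hb, run_replicate_add_mul_of_lt_abs (hper' q₂).2]
  · ext <;> simp only
    ring
  · simp only
    linarith [abs_sub_abs_le_abs_sub v (v + M.drift b B q + j * M.drift b P q₂),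
      abs_sub_comm v (v + M.drift b B q + j * M.drift b P q₂)]

end OneD1CA

open Filter OneD1CA

theorem eventually_lt_abs_add_mul {D : ℤ} (hD : D ≠ 0) (v R : ℤ) :
    ∀ᶠ i : ℕ in atTop, R < |v + i * D| := by
  filter_upwards [eventually_gt_atTop (R + |v|).toNat] with i hi
  have hD : (1 : ℤ) ≤ |D| := Int.one_le_abs hD
  have hi : R + |v| < i := by omega
  have hsub := abs_add_le (v + i * D) (-v)
  rw [add_neg_cancel_comm, abs_neg, abs_mul, Nat.abs_cast] at hsub
  nlinarith

theorem eventually_lt_add_mul {P : ℕ} (hP : 0 < P) (G L : ℕ) :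
    ∀ᶠ i : ℕ in atTop, L < G + i * P := by
  filter_upwards [eventually_gt_atTop L] with i hi
  have := Nat.le_mul_of_pos_right i hP
  omega

def abc (p q r : ℕ) : List ΓN :=
  replicate p .a ++ replicate q .b ++ replicate r .c

theorem count_abc (p q r : ℕ) :
    (abc p q r).count .a = p ∧ (abc p q r).count .b = q ∧ (abc p q r).count .c = r := by
  simp [abc, count_replicate]

theorem ne_d_of_mem_abc {p q r : ℕ} : ∀ x ∈ abc p q r, x ≠ .d := by
  simp only [abc, mem_append, mem_replicate]
  rintro x ((⟨-, rfl⟩ | ⟨-, rfl⟩) | ⟨-, rfl⟩) <;> nofun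

theorem abc_append_replicate_mem_ONE {p q r n : ℕ} (h : exactlyOne (p = q) (q = r) (r = p))
    (hn : p + q + r ≤ n) : abc p q r ++ replicate n .d ∈ ONE := by
  obtain ⟨ha, hb, hc⟩ := count_abc p q r
  exact ⟨_, _, rfl, ne_d_of_mem_abc, fun _ => eq_of_mem_replicate,
    by simpa [abc, add_assoc] using hn, by simpa only [eqAB, eqBC, eqCA, ha, hb, hc] using h⟩

theorem abc_append_replicate_mem_NONE {p q r n : ℕ} (hpq : p ≠ q) (hqr : q ≠ r)
    (hrp : r ≠ p) (hn : p + q + r ≤ n) : abc p q r ++ replicate n .d ∈ NONE := by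
  obtain ⟨ha, hb, hc⟩ := count_abc p q r
  exact ⟨_, _, rfl, ne_d_of_mem_abc, fun _ => eq_of_mem_replicate,
    by simpa [abc, add_assoc] using hn, by rwa [eqAB, ha, hb], by rwa [eqBC, hb, hc],
    by rwa [eqCA, hc, ha]⟩

variable {M : OneD1CA ΓN} {c : M.Q × ℤ}

theorem exists_mem_ONE_mem_NONE_of_run_abc_eq {p q r p' q' r' : ℕ}
    (hone : exactlyOne (p = q) (q = r) (r = p)) (hpq : p' ≠ q') (hqr : q' ≠ r')
    (hrp : r' ≠ p')
    (h : M.run c (abc p q r) = M.run c (abc p' q' r')) :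
    ∃ x ∈ ONE, ∃ z ∈ NONE, M.run c x = M.run c z :=
  ⟨_, abc_append_replicate_mem_ONE (n := p + q + r + (p' + q' + r')) hone (by omega),
    _, abc_append_replicate_mem_NONE hpq hqr hrp le_add_self, by rw [run_append, run_append, h]⟩

theorem exists_mem_ONE_mem_NONE_of_injective (hinj : Injective fun k => M.run c (replicate k .a)) :
    ∃ x ∈ ONE, ∃ z ∈ NONE, M.run c x = M.run c z := by
  obtain ⟨G, Pa, q, v, Da, hPa, hDa, ha⟩ := exists_run_replicate_add_mul_eq_of_injective hinj
  obtain ⟨B, P, q', S, Db, Dc, hP, hbc⟩ := exists_run_replicate_replicate_eq ΓN.b ΓN.c q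
  -- The NONE-word will have `Db` fewer `a`-periods and `Da` more `b`-periods than the ONE-word,
  -- which leaves the final counter unchanged.
  obtain ⟨j, j', hj⟩ : ∃ j j' : ℕ, (j' : ℤ) - j = Da :=
    ⟨_, _, Int.toNat_sub_toNat_neg Da⟩
  have hlarge : ∀ᶠ i : ℕ in atTop, B + j * P < G + i * Pa ∧ B + j' * P < G + i * Pa ∧
      M.m * (B + j * P) + M.m * (B + j * P) < |v + i * Da| ∧
      M.m * (B + j' * P) + M.m * (B + j * P) < |v + i * Da| :=
    (eventually_lt_add_mul hPa _ _).and <| (eventually_lt_add_mul hPa _ _).and <|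
      (eventually_lt_abs_add_mul hDa _ _).and (eventually_lt_abs_add_mul hDa _ _)
  obtain ⟨K, ⟨hx₁, -, hx₂, -⟩, ⟨hz₁, hz₂, -, hz₃⟩⟩ :=
    (((tendsto_add_atTop_nat Db.toNat).eventually hlarge).and
      ((tendsto_add_atTop_nat (-Db).toNat).eventually hlarge)).exists
  have hi : ((K + Db.toNat : ℕ) : ℤ) - (K + (-Db).toNat : ℕ) = Db := by
    push_cast
    linarith [Int.toNat_sub_toNat_neg Db]
  have hjj' : B + j' * P ≠ B + j * P := fun h => by
    have := Nat.eq_of_mul_eq_mul_right hP (Nat.add_left_cancel h)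
    omega
  refine exists_mem_ONE_mem_NONE_of_run_abc_eq (Or.inr (Or.inl ⟨hx₁.ne', rfl, hx₁.ne⟩))
    hz₂.ne' hjj' hz₁.ne ?_
  rw [abc, abc, run_append, run_append, run_append, run_append, ha, ha, hbc _ _ _ hx₂,
    hbc _ _ _ hz₃]
  congr 1
  linear_combination Da * hi - Db * hj

theorem exists_mem_ONE_mem_NONE_run_eq (M : OneD1CA ΓN) (c : M.Q × ℤ) :
    ∃ x ∈ ONE, ∃ z ∈ NONE, M.run c x = M.run c z := by
  by_cases hinj : Injective fun k => M.run c (replicate k .a)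
  · exact exists_mem_ONE_mem_NONE_of_injective hinj
  obtain ⟨k₁, k₂, heq, hne⟩ := not_injective_iff.1 hinj
  refine exists_mem_ONE_mem_NONE_of_run_abc_eq (p := k₁) (q := k₁) (r := k₁ + k₂ + 1)
    (p' := k₂) (q' := k₁) (r' := k₁ + k₂ + 1) (Or.inl ⟨rfl, by omega, by omega⟩) (Ne.symm hne)
    (by omega) (by omega) ?_
  rw [abc, abc, run_append, run_append, run_append, run_append]
  exact congrArg (fun c' => M.run (M.run c' (replicate k₁ .b)) (replicate (k₁ + k₂ + 1) .c))
    heq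

theorem exists_run_eq_of_mem_pow (M : OneD1CA ΓN) (c : M.Q × ℤ) (t : ℕ) :
    ∃ x ∈ (ONE * NONE) ^ t, ∃ z ∈ (NONE * ONE) ^ t, M.run c x = M.run c z := by
  induction t with
  | zero => exact ⟨[], by simp, [], by simp, rfl⟩
  | succ t ih =>
    obtain ⟨x, hx, z, hz, hxz⟩ := ih
    obtain ⟨x₁, hx₁, z₁, hz₁, h₁⟩ := exists_mem_ONE_mem_NONE_run_eq M (M.run c x)
    obtain ⟨x₂, hx₂, z₂, hz₂, h₂⟩ :=
      exists_mem_ONE_mem_NONE_run_eq M (M.run (M.run c x) x₁)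
    refine ⟨x ++ (x₁ ++ z₂), ?_, z ++ (z₁ ++ x₂), ?_, ?_⟩
    · rw [pow_succ]
      exact Language.append_mem_mul hx ⟨_, hx₁, _, hz₂, rfl⟩
    · rw [pow_succ]
      exact Language.append_mem_mul hz ⟨_, hz₁, _, hx₂, rfl⟩
    rw [run_append, run_append, run_append, run_append, ← hxz, ← h₁, ← h₂]

theorem stmt10_general (t : ℕ) (M : OneD1CA ΓN) :
    ¬ ((∀ w ∈ (ONE * NONE) ^ t, M.accepts w) ∧
        (∀ w ∈ (NONE * ONE) ^ t, ¬ M.accepts w)) := by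
  rintro ⟨hyes, hno⟩
  obtain ⟨x, hx, z, hz, hxz⟩ := exists_run_eq_of_mem_pow M (M.step (M.q0, 0) .cent) t
  have hxacc := hyes x hx
  rw [accepts_iff_run, hxz, ← accepts_iff_run] at hxacc
  exact hno z hz hxacc

/-- for every `t ≥ 1`, no 1D1CA solves the promise problem `ONE-NONE(t)`. -/
theorem stmt10 (t : ℕ) (ht : 1 ≤ t) (M : OneD1CA ΓN) :
    ¬ ((∀ w ∈ (ONE * NONE) ^ t, M.accepts w) ∧
        (∀ w ∈ (NONE * ONE) ^ t, ¬ M.accepts w)) :=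
  stmt10_general t M
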